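/- arXiv:2411.15363 — 2 statements merged into one kernel-verified Lean document; each statement's English description precedes it below -/
import Mathlib

section
/- Let Λ be a normal greedoid over a finite alphabet Σ that possesses the interval property and satisfies: for all flats F, F' of Λ and every flat M that is a meet of F and F', κ(M) = κ(F) ∩ κ(F'). Then the greatest representation ρ♮ is a polymatroid rank function, i.e. ρ♮(∅) = 0, ρ♮ is monotone, and ρ♮ is submodular. -/
namespace PaperPG

def letters {A : Type*} (w : List A) : Set A := {x | x ∈ w}

/-- A greedoid over alphabet `A`: a nonempty simple hereditary language with exchange. -/
structure Greedoid (A : Type*) where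
  lang : Set (List A)
  lang_nonempty : lang.Nonempty
  simple : ∀ w ∈ lang, w.Nodup
  hereditary : ∀ α β : List A, α ++ β ∈ lang → α ∈ lang
  exchange : ∀ α ∈ lang, ∀ β ∈ lang, β.length < α.length →
      ∃ x ∈ letters α, β ++ [x] ∈ lang

/-- Kernel of a flat: union of the letter sets of its members. -/
def flatKernel {A : Type*} (F : Set (List A)) : Set A := {y : A | ∃ β ∈ F, y ∈ β}

namespace Greedoid

variable {A : Type*} (G : Greedoid A)

/-- `X` is feasible if it is the set of letters of a feasible word. -/
def Feasible (X : Set A) : Prop := ∃ α ∈ G.lang, letters α = X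

/-- The interval property. -/
def IntervalProperty : Prop :=
  ∀ X Y Z : Set A, G.Feasible X → G.Feasible Y → G.Feasible Z →
    X ⊆ Y → Y ⊆ Z → ∀ x : A, x ∉ Z →
      G.Feasible (X ∪ {x}) → G.Feasible (Z ∪ {x}) → G.Feasible (Y ∪ {x})

/-- A loop is a letter occurring in no feasible word. -/
def IsLoop (x : A) : Prop := ∀ α ∈ G.lang, x ∉ α

/-- A greedoid is normal if it has no loops. -/
def Normal : Prop := ∀ x : A, ¬ G.IsLoop x

/-- Greedoid rank: maximum length of a feasible word with letters inside `X`. -/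
noncomputable def rank (X : Set A) : ℕ :=
  sSup {n : ℕ | ∃ α ∈ G.lang, letters α ⊆ X ∧ α.length = n}

/-- Greedoid span. -/
def spanR (X : Set A) : Set A := {y : A | G.rank (X ∪ {y}) = G.rank X}

/-- Kernel of a set. -/
def kernel (X : Set A) : Set A :=
  {y : A | ∃ β ∈ G.lang, letters β ⊆ G.spanR X ∧ y ∈ β}

/-- Continuations of a word. -/
def cont (α : List A) : Set A := {x : A | α ++ [x] ∈ G.lang}

/-- The flat (equivalence class under equal continuations) of a word. -/
def flatOf (α : List A) : Set (List A) := {β ∈ G.lang | G.cont β = G.cont α}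

def IsFlat (F : Set (List A)) : Prop := ∃ α ∈ G.lang, F = G.flatOf α


/-- Order on flats: `[α] ⊑ [β]` iff some `αγ ∈ Λ` with `αγ ∼ β`. -/
def flatLE (F F' : Set (List A)) : Prop :=
  ∃ α ∈ F, ∃ γ : List A, α ++ γ ∈ G.lang ∧ (α ++ γ) ∈ F'

def flatLT (F F' : Set (List A)) : Prop := G.flatLE F F' ∧ F ≠ F'

/-- Covering relation on flats. -/
def flatCovBy (F F' : Set (List A)) : Prop :=
  G.flatLT F F' ∧ ∀ E : Set (List A), G.IsFlat E → G.flatLT F E → G.flatLT E F' → False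

/-- `M` is a meet of the flats `F` and `F'`. -/
def IsMeet (M F F' : Set (List A)) : Prop :=
  G.IsFlat M ∧ G.flatLE M F ∧ G.flatLE M F' ∧
    ∀ E : Set (List A), G.IsFlat E → G.flatLE E F → G.flatLE E F' → G.flatLE E M

/-- A basic word: one of maximum length. -/
def Basic (w : List A) : Prop := w ∈ G.lang ∧ ∀ v ∈ G.lang, v.length ≤ w.length

/-- Optimism: every non-loop is a continuation of some prefix of every basic word. -/
def Optimistic : Prop :=
  ∀ y : A, ¬ G.IsLoop y → ∀ w : List A, G.Basic w →
    ∃ i ≤ w.length, y ∈ G.cont (w.take i)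

/-- The greatest representation `ρ♮`. -/
noncomputable def rhoNat (X : Set A) : ℕ :=
  sInf {n : ℕ | ∃ α ∈ G.lang, X ⊆ G.kernel (letters α) ∧ α.length = n}

end Greedoid

/-- A polymatroid rank function: normalized, monotone, submodular. -/
def IsPolymatroid {A : Type*} (ρ : Set A → ℝ) : Prop :=
  ρ ∅ = 0 ∧ (∀ X Y : Set A, X ⊆ Y → ρ X ≤ ρ Y) ∧
    ∀ X Y : Set A, ρ (X ∪ Y) + ρ (X ∩ Y) ≤ ρ X + ρ Y

/-- `ρ` represents `G`: the language consists exactly of the simple words each of whose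
prefixes of length `i` has rank `i`. -/
def Represents {A : Type*} (ρ : Set A → ℝ) (G : Greedoid A) : Prop :=
  ∀ w : List A, w ∈ G.lang ↔
    (w.Nodup ∧ ∀ i : ℕ, i < w.length → ρ (letters (w.take (i + 1))) = (i + 1 : ℝ))

/-- Polymatroid span. -/
def spanP {A : Type*} (ρ : Set A → ℝ) (X : Set A) : Set A :=
  {y : A | ρ (X ∪ {y}) = ρ X}

/-- Closed sets of a polymatroid. -/
def ClosedP {A : Type*} (ρ : Set A → ℝ) (X : Set A) : Prop := spanP ρ X = X

/-- Covering relation on the closed sets of `ρ`, ordered by inclusion. -/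
def closedCovBy {A : Type*} (ρ : Set A → ℝ) (S S' : Set A) : Prop :=
  ClosedP ρ S ∧ ClosedP ρ S' ∧ S ⊂ S' ∧
    ∀ T : Set A, ClosedP ρ T → S ⊂ T → T ⊂ S' → False

/-- Alignment of a representation. -/
def Aligned {A : Type*} (G : Greedoid A) (ρ : Set A → ℝ) : Prop :=
  ∃ φ : Set (List A) → Set A,
    (∀ F, G.IsFlat F → ClosedP ρ (φ F)) ∧
    (∀ F F', G.IsFlat F → G.IsFlat F' → G.flatLE F F' → φ F ⊆ φ F') ∧
    (∀ α ∈ G.lang, ρ (letters α) = ρ (φ (G.flatOf α))) ∧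
    (∀ α ∈ G.lang, letters α ⊆ φ (G.flatOf α)) ∧
    (∀ F F', G.IsFlat F → G.IsFlat F' → G.flatCovBy F F' → closedCovBy ρ (φ F) (φ F'))

/-- The maps `φ* : F ↦ σ_ρ(κ(F))` and `φ_* : S ↦ κ⁻¹(S)` are well-defined order-preserving
maps between the flats of `G` and the closed sets of `ρ` forming a Galois connection in
which `φ*` preserves the covering relation of the flats. -/
def GaloisPair {A : Type*} (G : Greedoid A) (ρ : Set A → ℝ) : Prop :=
  (∀ F, G.IsFlat F → ClosedP ρ (spanP ρ (flatKernel F))) ∧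
  (∀ F F', G.IsFlat F → G.IsFlat F' → G.flatLE F F' →
      spanP ρ (flatKernel F) ⊆ spanP ρ (flatKernel F')) ∧
  (∀ S, ClosedP ρ S → ∃! F, G.IsFlat F ∧ flatKernel F = G.kernel S) ∧
  (∀ S S', ClosedP ρ S → ClosedP ρ S' → S ⊆ S' →
      ∀ F F', G.IsFlat F → flatKernel F = G.kernel S →
        G.IsFlat F' → flatKernel F' = G.kernel S' → G.flatLE F F') ∧
  (∀ F, G.IsFlat F → ∀ S, ClosedP ρ S → ∀ F', G.IsFlat F' → flatKernel F' = G.kernel S →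
      (spanP ρ (flatKernel F) ⊆ S ↔ G.flatLE F F')) ∧
  (∀ F F', G.IsFlat F → G.IsFlat F' → G.flatCovBy F F' →
      closedCovBy ρ (spanP ρ (flatKernel F)) (spanP ρ (flatKernel F')))

/-! ### Auxiliary development for the main theorem -/

section Aux

variable {A : Type*}

lemma letters_nil : letters ([] : List A) = ∅ := by
  ext x; simp [letters]

lemma letters_append (u v : List A) : letters (u ++ v) = letters u ∪ letters v := by
  ext x; simp [letters]

lemma letters_singleton (a : A) : letters [a] = {a} := by
  ext x; simp [letters]

lemma ncard_letters_le_length (w : List A) : (letters w).ncard ≤ w.length := by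
  classical
  have h : letters w = (w.toFinset : Set A) := by ext x; simp [letters]
  rw [h, Set.ncard_coe_finset]
  exact w.toFinset_card_le

lemma ncard_letters_of_nodup {w : List A} (hw : w.Nodup) : (letters w).ncard = w.length := by
  classical
  have h : letters w = (w.toFinset : Set A) := by ext x; simp [letters]
  rw [h, Set.ncard_coe_finset, List.toFinset_card_of_nodup hw]

lemma length_le_of_nodup_subset {w v : List A} (hw : w.Nodup) (h : letters w ⊆ letters v) :
    w.length ≤ v.length := by
  calc w.length = (letters w).ncard := (ncard_letters_of_nodup hw).symm
    _ ≤ (letters v).ncard := Set.ncard_le_ncard h (v.finite_toSet)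
    _ ≤ v.length := ncard_letters_le_length v

namespace Greedoid

variable (G : Greedoid A)

lemma nil_mem : ([] : List A) ∈ G.lang := by
  obtain ⟨w, hw⟩ := G.lang_nonempty
  exact G.hereditary [] w hw

lemma not_mem_of_append_mem {u : List A} {z : A} (h : u ++ [z] ∈ G.lang) :
    z ∉ letters u := by
  have hnd := G.simple _ h
  rw [List.nodup_append] at hnd
  intro hz
  exact hnd.2.2 z hz z (by simp) rfl

variable [Fintype A]

lemma length_le_card {w : List A} (hw : w ∈ G.lang) : w.length ≤ Fintype.card A :=
  (G.simple w hw).length_le_card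

lemma rank_set_nonempty (X : Set A) :
    {n : ℕ | ∃ α ∈ G.lang, letters α ⊆ X ∧ α.length = n}.Nonempty :=
  ⟨0, [], G.nil_mem, by simp [letters_nil], rfl⟩

lemma rank_set_bddAbove (X : Set A) :
    BddAbove {n : ℕ | ∃ α ∈ G.lang, letters α ⊆ X ∧ α.length = n} := by
  refine ⟨Fintype.card A, ?_⟩
  rintro n ⟨α, hα, -, rfl⟩
  exact G.length_le_card hα

lemma length_le_rank {X : Set A} {α : List A} (hα : α ∈ G.lang)
    (h : letters α ⊆ X) : α.length ≤ G.rank X :=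
  le_csSup (G.rank_set_bddAbove X) ⟨α, hα, h, rfl⟩

lemma rank_le {X : Set A} {n : ℕ}
    (h : ∀ α ∈ G.lang, letters α ⊆ X → α.length ≤ n) : G.rank X ≤ n := by
  refine csSup_le (G.rank_set_nonempty X) ?_
  rintro m ⟨α, hα, hsub, rfl⟩
  exact h α hα hsub

lemma rank_mono {X Y : Set A} (h : X ⊆ Y) : G.rank X ≤ G.rank Y := by
  refine G.rank_le ?_
  intro α hα hsub
  exact G.length_le_rank hα (hsub.trans h)

lemma rank_letters {u : List A} (hu : u ∈ G.lang) :
    G.rank (letters u) = u.length := by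
  refine le_antisymm (G.rank_le ?_) (G.length_le_rank hu subset_rfl)
  intro α hα hsub
  exact length_le_of_nodup_subset (G.simple α hα) hsub

lemma span_eq {u : List A} (hu : u ∈ G.lang) :
    G.spanR (letters u) = {y : A | u ++ [y] ∈ G.lang}ᶜ := by
  ext y
  simp only [Greedoid.spanR, Set.mem_setOf_eq, Set.mem_compl_iff]
  constructor
  · intro h hy
    have hsub : letters (u ++ [y]) ⊆ letters u ∪ {y} := by
      simp [letters_append, letters_singleton]
    have h1 := G.length_le_rank hy hsub
    rw [List.length_append, List.length_singleton, h, G.rank_letters hu] at h1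
    omega
  · intro h
    have hle : G.rank (letters u ∪ {y}) ≤ u.length := by
      refine G.rank_le ?_
      intro α hα hsub
      by_contra hlen
      push_neg at hlen
      obtain ⟨z, hz, hz2⟩ := G.exchange α hα u hu hlen
      rcases hsub hz with hz3 | hz3
      · exact G.not_mem_of_append_mem hz2 hz3
      · rw [Set.mem_singleton_iff] at hz3; subst hz3; exact h hz2
    have hge : G.rank (letters u) ≤ G.rank (letters u ∪ {y}) :=
      G.rank_mono Set.subset_union_left
    rw [G.rank_letters hu] at hge
    rw [G.rank_letters hu]
    omega

lemma mem_span_iff {u : List A} (hu : u ∈ G.lang) {y : A} :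
    y ∈ G.spanR (letters u) ↔ u ++ [y] ∉ G.lang := by
  rw [G.span_eq hu]; rfl

lemma letters_subset_span {u : List A} (hu : u ∈ G.lang) :
    letters u ⊆ G.spanR (letters u) := by
  intro y hy
  rw [G.mem_span_iff hu]
  intro hmem
  exact G.not_mem_of_append_mem hmem hy

lemma span_length_le {u w : List A} (hu : u ∈ G.lang) (hw : w ∈ G.lang)
    (h : letters w ⊆ G.spanR (letters u)) : w.length ≤ u.length := by
  by_contra hlen
  push_neg at hlen
  obtain ⟨z, hz, hz2⟩ := G.exchange w hw u hu hlen
  exact (G.mem_span_iff hu).mp (h hz) hz2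

lemma extend_to_len : ∀ (k : ℕ) (u : List A), u ∈ G.lang → ∀ c ∈ G.lang,
    u.length + k = c.length →
    ∃ γ, u ++ γ ∈ G.lang ∧ letters γ ⊆ letters c ∧ (u ++ γ).length = c.length := by
  intro k
  induction k with
  | zero =>
    intro u hu c hc hlen
    exact ⟨[], by simpa using hu, by simp [letters_nil], by simpa using hlen⟩
  | succ n ih =>
    intro u hu c hc hlen
    obtain ⟨z, hz, hz2⟩ := G.exchange c hc u hu (by omega)
    obtain ⟨γ, h1, h2, h3⟩ := ih (u ++ [z]) hz2 c hc
      (by rw [List.length_append, List.length_singleton]; omega)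
    refine ⟨[z] ++ γ, ?_, ?_, ?_⟩
    · rwa [← List.append_assoc]
    · rw [letters_append, letters_singleton]
      exact Set.union_subset (by simpa using hz) h2
    · rw [← List.append_assoc]; exact h3

lemma cont_subset_of_max {u v : List A} {C : Set A}
    (hu : u ∈ G.lang) (hv : v ∈ G.lang) (huC : letters u ⊆ C)
    (hvC : letters v ⊆ C) (hlen : v.length = u.length)
    (hbound : ∀ w ∈ G.lang, letters w ⊆ C → w.length ≤ u.length) :
    G.cont u ⊆ G.cont v := by
  intro x hx
  have hux : u ++ [x] ∈ G.lang := hx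
  obtain ⟨z, hz, hz2⟩ := G.exchange (u ++ [x]) hux v hv
    (by rw [List.length_append, List.length_singleton]; omega)
  rw [letters_append, letters_singleton] at hz
  rcases hz with hz | hz
  · exfalso
    have h1 : letters (v ++ [z]) ⊆ C := by
      rw [letters_append, letters_singleton]
      exact Set.union_subset hvC (by simpa using huC hz)
    have h2 := hbound _ hz2 h1
    rw [List.length_append, List.length_singleton] at h2
    omega
  · rw [Set.mem_singleton_iff] at hz; subst hz
    exact hz2

lemma cont_eq_of_max {u v : List A} {C : Set A}
    (hu : u ∈ G.lang) (hv : v ∈ G.lang) (huC : letters u ⊆ C)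
    (hvC : letters v ⊆ C) (hlen : v.length = u.length)
    (hbound : ∀ w ∈ G.lang, letters w ⊆ C → w.length ≤ u.length) :
    G.cont v = G.cont u := by
  apply Set.Subset.antisymm
  · exact G.cont_subset_of_max hv hu hvC huC hlen.symm
      (fun w hw hwC => by have := hbound w hw hwC; omega)
  · exact G.cont_subset_of_max hu hv huC hvC hlen hbound

lemma span_eq_of_cont_eq {u v : List A} (hu : u ∈ G.lang) (hv : v ∈ G.lang)
    (h : G.cont u = G.cont v) : G.spanR (letters u) = G.spanR (letters v) := by
  rw [G.span_eq hu, G.span_eq hv]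
  show (G.cont u)ᶜ = (G.cont v)ᶜ
  rw [h]

lemma kernel_subset_span (X : Set A) : G.kernel X ⊆ G.spanR X := by
  rintro y ⟨β, hβ, hsub, hy⟩
  exact hsub hy

lemma kernel_eq_of_span_eq {X Y : Set A} (h : G.spanR X = G.spanR Y) :
    G.kernel X = G.kernel Y := by
  unfold Greedoid.kernel
  rw [h]

lemma kernel_eq_of_cont_eq {u v : List A} (hu : u ∈ G.lang) (hv : v ∈ G.lang)
    (h : G.cont u = G.cont v) : G.kernel (letters u) = G.kernel (letters v) :=
  G.kernel_eq_of_span_eq (G.span_eq_of_cont_eq hu hv h)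

lemma letters_subset_kernel {u : List A} (hu : u ∈ G.lang) :
    letters u ⊆ G.kernel (letters u) :=
  fun y hy => ⟨u, hu, G.letters_subset_span hu, hy⟩

/-- The key consequence of the interval property: letters of feasible words lying in the
span of a feasible word stay in the span after a one-step feasible extension. -/
lemma span_extend (hint : G.IntervalProperty) {u : List A} {x : A}
    (hux : u ++ [x] ∈ G.lang) :
    ∀ w ∈ G.lang, letters w ⊆ G.spanR (letters u) →
      letters w ⊆ G.spanR (letters (u ++ [x])) := by
  have hu : u ∈ G.lang := G.hereditary u [x] hux
  intro w
  induction w using List.reverseRecOn with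
  | nil => intro _ _; rw [letters_nil]; exact Set.empty_subset _
  | append_singleton p t ih =>
    intro hw hsub
    have hp : p ∈ G.lang := G.hereditary p [t] hw
    have hpsub : letters p ⊆ G.spanR (letters u) := fun y hy =>
      hsub (by rw [letters_append]; exact Set.mem_union_left _ hy)
    have hP : letters p ⊆ G.spanR (letters (u ++ [x])) := ih hp hpsub
    rw [letters_append, letters_singleton]
    refine Set.union_subset hP ?_
    rw [Set.singleton_subset_iff]
    by_cases htm : t ∈ letters (u ++ [x])
    · exact G.letters_subset_span hux htm
    by_contra hts
    have huxt : (u ++ [x]) ++ [t] ∈ G.lang := by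
      by_contra hc
      exact hts ((G.mem_span_iff hux).mpr hc)
    have ht_span_u : t ∈ G.spanR (letters u) :=
      hsub (by rw [letters_append, letters_singleton]; exact Set.mem_union_right _ rfl)
    have hplen : p.length ≤ u.length := G.span_length_le hu hp hpsub
    obtain ⟨γ, hM0, hγu, hM0len⟩ :=
      G.extend_to_len (u.length - p.length) p hp u hu (by omega)
    have hM0subU : letters (p ++ γ) ⊆ G.spanR (letters u) := by
      rw [letters_append]
      exact Set.union_subset hpsub (hγu.trans (G.letters_subset_span hu))
    have hcont0 : G.cont (p ++ γ) = G.cont u :=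
      G.cont_eq_of_max hu hM0 (G.letters_subset_span hu) hM0subU hM0len
        (fun w' hw' hwC => G.span_length_le hu hw' hwC)
    have hM0x : (p ++ γ) ++ [x] ∈ G.lang := by
      have hxc : x ∈ G.cont (p ++ γ) := by rw [hcont0]; exact hux
      exact hxc
    have hM1sub : letters ((p ++ γ) ++ [x]) ⊆ G.spanR (letters (u ++ [x])) := by
      rw [letters_append, letters_singleton, letters_append]
      refine Set.union_subset (Set.union_subset hP ?_) ?_
      · intro y hy
        exact G.letters_subset_span hux (by rw [letters_append]; exact Set.mem_union_left _ (hγu hy))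
      · rw [Set.singleton_subset_iff]
        exact G.letters_subset_span hux
          (by rw [letters_append, letters_singleton]; exact Set.mem_union_right _ rfl)
    have hM1len : ((p ++ γ) ++ [x]).length = (u ++ [x]).length := by
      simp only [List.length_append, List.length_singleton] at hM0len ⊢
      omega
    have hcont1 : G.cont ((p ++ γ) ++ [x]) = G.cont (u ++ [x]) :=
      G.cont_eq_of_max hux hM0x (G.letters_subset_span hux) hM1sub hM1len
        (fun w' hw' hwC => G.span_length_le hux hw' hwC)
    have hM1t : ((p ++ γ) ++ [x]) ++ [t] ∈ G.lang := by
      have htc : t ∈ G.cont ((p ++ γ) ++ [x]) := by rw [hcont1]; exact huxt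
      exact htc
    have hFX : G.Feasible (letters p) := ⟨p, hp, rfl⟩
    have hFY : G.Feasible (letters (p ++ γ)) := ⟨_, hM0, rfl⟩
    have hFZ : G.Feasible (letters ((p ++ γ) ++ [x])) := ⟨_, hM0x, rfl⟩
    have hXY : letters p ⊆ letters (p ++ γ) := by
      rw [letters_append]; exact Set.subset_union_left
    have hYZ : letters (p ++ γ) ⊆ letters ((p ++ γ) ++ [x]) := by
      rw [letters_append (p ++ γ)]; exact Set.subset_union_left
    have htZ : t ∉ letters ((p ++ γ) ++ [x]) := fun hmem => hts (hM1sub hmem)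
    have hFXt : G.Feasible (letters p ∪ {t}) :=
      ⟨p ++ [t], hw, by rw [letters_append, letters_singleton]⟩
    have hFZt : G.Feasible (letters ((p ++ γ) ++ [x]) ∪ {t}) :=
      ⟨_, hM1t, by rw [letters_append ((p ++ γ) ++ [x]), letters_singleton]⟩
    obtain ⟨ω, hω, hωl⟩ := hint _ _ _ hFX hFY hFZ hXY hYZ t htZ hFXt hFZt
    have hωsub : letters ω ⊆ G.spanR (letters u) := by
      rw [hωl]
      exact Set.union_subset hM0subU (by rwa [Set.singleton_subset_iff])
    have hlenle := G.span_length_le hu hω hωsub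
    have htM0 : t ∉ letters (p ++ γ) := by
      rw [letters_append]
      rintro (h | h)
      · exact hts (hP h)
      · exact htm (by rw [letters_append]; exact Set.mem_union_left _ (hγu h))
    have h1 : (letters ω).ncard = ω.length := ncard_letters_of_nodup (G.simple ω hω)
    have h2 : (letters (p ++ γ)).ncard = (p ++ γ).length :=
      ncard_letters_of_nodup (G.simple _ hM0)
    have h3 : ω.length = (p ++ γ).length + 1 := by
      rw [← h1, hωl, Set.union_singleton,
        Set.ncard_insert_of_notMem htM0 ((p ++ γ).finite_toSet), h2]
    omega

lemma kernel_mono_append (hint : G.IntervalProperty) :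
    ∀ (γ u : List A), u ++ γ ∈ G.lang →
      G.kernel (letters u) ⊆ G.kernel (letters (u ++ γ)) := by
  intro γ
  induction γ with
  | nil => intro u h; simp
  | cons x γ' ih =>
    intro u h
    have h2 : (u ++ [x]) ++ γ' ∈ G.lang := by
      rwa [List.append_assoc, List.singleton_append]
    have hux : u ++ [x] ∈ G.lang := G.hereditary _ _ h2
    have step : G.kernel (letters u) ⊆ G.kernel (letters (u ++ [x])) := by
      rintro y ⟨β, hβ, hsub, hy⟩
      exact ⟨β, hβ, G.span_extend hint hux β hβ hsub, hy⟩
    refine step.trans ?_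
    have h3 := ih (u ++ [x]) h2
    rwa [List.append_assoc, List.singleton_append] at h3

lemma flatKernel_flatOf {u : List A} (hu : u ∈ G.lang) :
    flatKernel (G.flatOf u) = G.kernel (letters u) := by
  ext y
  constructor
  · rintro ⟨β, ⟨hβ, hcont⟩, hy⟩
    refine ⟨β, hβ, ?_, hy⟩
    have h1 := G.letters_subset_span hβ
    rwa [G.span_eq_of_cont_eq hβ hu hcont] at h1
  · rintro ⟨β, hβ, hsub, hy⟩
    have hblen : β.length ≤ u.length := G.span_length_le hu hβ hsub
    obtain ⟨γ, h1, h2, h3⟩ := G.extend_to_len (u.length - β.length) β hβ u hu (by omega)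
    have hsub2 : letters (β ++ γ) ⊆ G.spanR (letters u) := by
      rw [letters_append]
      exact Set.union_subset hsub (h2.trans (G.letters_subset_span hu))
    have hcont : G.cont (β ++ γ) = G.cont u :=
      G.cont_eq_of_max hu h1 (G.letters_subset_span hu) hsub2 h3
        (fun w hw hwC => G.span_length_le hu hw hwC)
    exact ⟨β ++ γ, ⟨h1, hcont⟩, by rw [List.mem_append]; exact Or.inl hy⟩

lemma exists_max_word (C : Set A) :
    ∃ m ∈ G.lang, letters m ⊆ C ∧ ∀ w ∈ G.lang, letters w ⊆ C → w.length ≤ m.length := by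
  have hne : {n : ℕ | ∃ w ∈ G.lang, letters w ⊆ C ∧ w.length = n}.Nonempty :=
    ⟨0, [], G.nil_mem, by simp [letters_nil], rfl⟩
  have hbdd : BddAbove {n : ℕ | ∃ w ∈ G.lang, letters w ⊆ C ∧ w.length = n} := by
    refine ⟨Fintype.card A, ?_⟩
    rintro n ⟨w, hw, -, rfl⟩
    exact G.length_le_card hw
  obtain ⟨m, hm, hmC, hmlen⟩ := Nat.sSup_mem hne hbdd
  refine ⟨m, hm, hmC, fun w hw hwC => ?_⟩
  rw [hmlen]
  exact le_csSup hbdd ⟨w, hw, hwC, rfl⟩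

lemma isMeet_max_word (hint : G.IntervalProperty) {α β m : List A}
    (hα : α ∈ G.lang) (hβ : β ∈ G.lang) (hm : m ∈ G.lang)
    (hmD : letters m ⊆ G.spanR (letters α) ∩ G.spanR (letters β))
    (hmax : ∀ w ∈ G.lang, letters w ⊆ G.spanR (letters α) ∩ G.spanR (letters β) →
      w.length ≤ m.length) :
    G.IsMeet (G.flatOf m) (G.flatOf α) (G.flatOf β) := by
  have key : ∀ c e : List A, c ∈ G.lang → e ∈ G.lang →
      letters e ⊆ G.spanR (letters c) →
      ∃ δ, e ++ δ ∈ G.lang ∧ (e ++ δ) ∈ G.flatOf c := by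
    intro c e hc he hsub
    have hlen : e.length ≤ c.length := G.span_length_le hc he hsub
    obtain ⟨δ, h1, h2, h3⟩ := G.extend_to_len (c.length - e.length) e he c hc (by omega)
    have hsub2 : letters (e ++ δ) ⊆ G.spanR (letters c) := by
      rw [letters_append]
      exact Set.union_subset hsub (h2.trans (G.letters_subset_span hc))
    exact ⟨δ, h1, h1, G.cont_eq_of_max hc h1 (G.letters_subset_span hc) hsub2 h3
      (fun w hw hwC => G.span_length_le hc hw hwC)⟩
  refine ⟨⟨m, hm, rfl⟩, ?_, ?_, ?_⟩
  · obtain ⟨δ, h1, h2⟩ := key α m hα hm (fun y hy => (hmD hy).1)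
    exact ⟨m, ⟨hm, rfl⟩, δ, h1, h2⟩
  · obtain ⟨δ, h1, h2⟩ := key β m hβ hm (fun y hy => (hmD hy).2)
    exact ⟨m, ⟨hm, rfl⟩, δ, h1, h2⟩
  · rintro E ⟨e, he, rfl⟩ ⟨e₀, he₀E, γ₁, hg1l, hg1F⟩ ⟨e₁, he₁E, γ₂, hg2l, hg2F⟩
    obtain ⟨he₀, hcont₀⟩ := he₀E
    obtain ⟨he₁, hcont₁⟩ := he₁E
    obtain ⟨hg1m, hg1c⟩ := hg1F
    obtain ⟨hg2m, hg2c⟩ := hg2F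
    have hsA : letters e₀ ⊆ G.spanR (letters α) := by
      have h1 : letters e₀ ⊆ G.spanR (letters (e₀ ++ γ₁)) := fun y hy =>
        G.letters_subset_span hg1l (by rw [letters_append]; exact Set.mem_union_left _ hy)
      rwa [G.span_eq_of_cont_eq hg1l hα hg1c] at h1
    have hsB : letters e₀ ⊆ G.spanR (letters β) := by
      have hce : G.cont e₀ = G.cont e₁ := by rw [hcont₀, hcont₁]
      have h1 : letters e₀ ⊆ G.spanR (letters e₁) := by
        have h0 := G.letters_subset_span he₀
        rwa [G.span_eq_of_cont_eq he₀ he₁ hce] at h0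
      have h2 : letters e₀ ⊆ G.kernel (letters e₁) := fun y hy => ⟨e₀, he₀, h1, hy⟩
      have h3 : G.kernel (letters e₁) ⊆ G.kernel (letters (e₁ ++ γ₂)) :=
        G.kernel_mono_append hint γ₂ e₁ hg2l
      have h4 : G.kernel (letters (e₁ ++ γ₂)) = G.kernel (letters β) :=
        G.kernel_eq_of_cont_eq hg2l hβ hg2c
      intro y hy
      have h5 : y ∈ G.kernel (letters (e₁ ++ γ₂)) := h3 (h2 hy)
      rw [h4] at h5
      exact G.kernel_subset_span _ h5
    have hsD : letters e₀ ⊆ G.spanR (letters α) ∩ G.spanR (letters β) :=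
      Set.subset_inter hsA hsB
    have hlen : e₀.length ≤ m.length := hmax e₀ he₀ hsD
    obtain ⟨δ, h1, h2, h3⟩ := G.extend_to_len (m.length - e₀.length) e₀ he₀ m hm (by omega)
    have hsub2 : letters (e₀ ++ δ) ⊆ G.spanR (letters α) ∩ G.spanR (letters β) := by
      rw [letters_append]
      exact Set.union_subset hsD (h2.trans hmD)
    have hcont : G.cont (e₀ ++ δ) = G.cont m :=
      G.cont_eq_of_max hm h1 hmD hsub2 h3 hmax
    exact ⟨e₀, ⟨he₀, hcont₀⟩, δ, h1, ⟨h1, hcont⟩⟩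

lemma greedy_absorb (v : List A) :
    ∀ (n : ℕ) (w : List A), w ∈ G.lang → (letters v \ letters w).ncard ≤ n →
      ∃ δ, w ++ δ ∈ G.lang ∧ (w ++ δ).length ≤ w.length + n ∧
        letters v ⊆ G.spanR (letters (w ++ δ)) := by
  intro n
  induction n with
  | zero =>
    intro w hw hcard
    refine ⟨[], by simpa using hw, by simp, ?_⟩
    rw [List.append_nil]
    intro t ht
    by_contra hts
    have htw : t ∉ letters w := fun h => hts (G.letters_subset_span hw h)
    have hmem : t ∈ letters v \ letters w := ⟨ht, htw⟩
    have hpos := (Set.ncard_pos (Set.toFinite _)).mpr ⟨t, hmem⟩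
    omega
  | succ k ih =>
    intro w hw hcard
    by_cases hall : letters v ⊆ G.spanR (letters w)
    · exact ⟨[], by simpa using hw, by simp, by rwa [List.append_nil]⟩
    · obtain ⟨t, ht, hts⟩ := Set.not_subset.mp hall
      have hwt : w ++ [t] ∈ G.lang := by
        by_contra hc
        exact hts ((G.mem_span_iff hw).mpr hc)
      have htw : t ∉ letters w := G.not_mem_of_append_mem hwt
      have hcard2 : (letters v \ letters (w ++ [t])).ncard ≤ k := by
        have hsub : letters v \ letters (w ++ [t]) ⊆ (letters v \ letters w) \ {t} := by
          intro y hy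
          rw [letters_append, letters_singleton] at hy
          exact ⟨⟨hy.1, fun h => hy.2 (Or.inl h)⟩, fun h => hy.2 (Or.inr h)⟩
        have h1 := Set.ncard_le_ncard hsub (Set.toFinite _)
        have h2 : ((letters v \ letters w) \ {t}).ncard + 1 = (letters v \ letters w).ncard :=
          Set.ncard_diff_singleton_add_one ⟨ht, htw⟩ (Set.toFinite _)
        omega
      obtain ⟨δ, hδ1, hδ2, hδ3⟩ := ih (w ++ [t]) hwt hcard2
      refine ⟨[t] ++ δ, ?_, ?_, ?_⟩
      · rwa [← List.append_assoc]
      · rw [← List.append_assoc]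
        rw [List.length_append, List.length_append, List.length_singleton] at hδ2 ⊢
        omega
      · rwa [← List.append_assoc]

lemma exists_big_word (hnorm : G.Normal) :
    ∃ w ∈ G.lang, ∀ X : Set A, X ⊆ G.kernel (letters w) := by
  obtain ⟨w, hw, -, hmax⟩ := G.exists_max_word Set.univ
  refine ⟨w, hw, fun X y _ => ?_⟩
  have hspan : G.spanR (letters w) = Set.univ := by
    rw [G.span_eq hw]
    ext z
    simp only [Set.mem_compl_iff, Set.mem_setOf_eq, Set.mem_univ, iff_true]
    intro hc
    have h2 := hmax _ hc (Set.subset_univ _)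
    rw [List.length_append, List.length_singleton] at h2
    omega
  have hy2 := hnorm y
  rw [Greedoid.IsLoop] at hy2
  push_neg at hy2
  obtain ⟨α, hα, hyα⟩ := hy2
  exact ⟨α, hα, by rw [hspan]; exact Set.subset_univ _, hyα⟩

lemma rhoNat_le {X : Set A} {α : List A} (hα : α ∈ G.lang)
    (h : X ⊆ G.kernel (letters α)) : G.rhoNat X ≤ α.length :=
  Nat.sInf_le ⟨α, hα, h, rfl⟩

lemma exists_rhoNat_word (hnorm : G.Normal) (X : Set A) :
    ∃ α ∈ G.lang, X ⊆ G.kernel (letters α) ∧ α.length = G.rhoNat X := by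
  have hne : {n : ℕ | ∃ α ∈ G.lang, X ⊆ G.kernel (letters α) ∧ α.length = n}.Nonempty := by
    obtain ⟨w, hw, hall⟩ := G.exists_big_word hnorm
    exact ⟨w.length, w, hw, hall X, rfl⟩
  exact Nat.sInf_mem hne

lemma rhoNat_empty : G.rhoNat ∅ = 0 :=
  Nat.le_zero.mp (G.rhoNat_le G.nil_mem (Set.empty_subset _))

lemma rhoNat_mono (hnorm : G.Normal) {X Y : Set A} (h : X ⊆ Y) :
    G.rhoNat X ≤ G.rhoNat Y := by
  obtain ⟨β, hβ, hYβ, hlen⟩ := G.exists_rhoNat_word hnorm Y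
  rw [← hlen]
  exact G.rhoNat_le hβ (h.trans hYβ)

lemma rhoNat_submodular (hnorm : G.Normal) (hint : G.IntervalProperty)
    (hker : ∀ F F' M : Set (List A), G.IsFlat F → G.IsFlat F' → G.IsMeet M F F' →
      flatKernel M = flatKernel F ∩ flatKernel F') (X Y : Set A) :
    G.rhoNat (X ∪ Y) + G.rhoNat (X ∩ Y) ≤ G.rhoNat X + G.rhoNat Y := by
  obtain ⟨α, hα, hXα, hαlen⟩ := G.exists_rhoNat_word hnorm X
  obtain ⟨β, hβ, hYβ, hβlen⟩ := G.exists_rhoNat_word hnorm Y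
  obtain ⟨m, hm, hmD, hmax⟩ :=
    G.exists_max_word (G.spanR (letters α) ∩ G.spanR (letters β))
  have hmeet := G.isMeet_max_word hint hα hβ hm hmD hmax
  have hkeq := hker _ _ _ ⟨α, hα, rfl⟩ ⟨β, hβ, rfl⟩ hmeet
  rw [G.flatKernel_flatOf hm, G.flatKernel_flatOf hα, G.flatKernel_flatOf hβ] at hkeq
  have hmeet_bound : G.rhoNat (X ∩ Y) ≤ m.length := by
    refine G.rhoNat_le hm ?_
    rw [hkeq]
    exact Set.inter_subset_inter hXα hYβ
  have hmlenα : m.length ≤ α.length := G.span_length_le hα hm (fun y hy => (hmD hy).1)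
  obtain ⟨γ₁, hv₁, hγ₁, hv₁len⟩ :=
    G.extend_to_len (α.length - m.length) m hm α hα (by omega)
  have hmlenβ : m.length ≤ β.length := G.span_length_le hβ hm (fun y hy => (hmD hy).2)
  obtain ⟨γ₂, hv₂, hγ₂, hv₂len⟩ :=
    G.extend_to_len (β.length - m.length) m hm β hβ (by omega)
  have hv₁sub : letters (m ++ γ₁) ⊆ G.spanR (letters α) := by
    rw [letters_append]
    exact Set.union_subset (fun y hy => (hmD hy).1) (hγ₁.trans (G.letters_subset_span hα))
  have hv₂sub : letters (m ++ γ₂) ⊆ G.spanR (letters β) := by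
    rw [letters_append]
    exact Set.union_subset (fun y hy => (hmD hy).2) (hγ₂.trans (G.letters_subset_span hβ))
  have hcont₁ : G.cont (m ++ γ₁) = G.cont α :=
    G.cont_eq_of_max hα hv₁ (G.letters_subset_span hα) hv₁sub hv₁len
      (fun w hw hwC => G.span_length_le hα hw hwC)
  have hcont₂ : G.cont (m ++ γ₂) = G.cont β :=
    G.cont_eq_of_max hβ hv₂ (G.letters_subset_span hβ) hv₂sub hv₂len
      (fun w hw hwC => G.span_length_le hβ hw hwC)
  obtain ⟨δ, hw₁, hwlen, hwspan⟩ := G.greedy_absorb (m ++ γ₂)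
    ((letters (m ++ γ₂) \ letters (m ++ γ₁)).ncard) (m ++ γ₁) hv₁ le_rfl
  have hcard : (letters (m ++ γ₂) \ letters (m ++ γ₁)).ncard ≤ γ₂.length := by
    have hsub : letters (m ++ γ₂) \ letters (m ++ γ₁) ⊆ letters γ₂ := by
      intro y hy
      obtain ⟨h1, h2⟩ := hy
      rw [letters_append] at h1
      rcases h1 with h1 | h1
      · exact absurd (by rw [letters_append]; exact Set.mem_union_left _ h1) h2
      · exact h1
    calc (letters (m ++ γ₂) \ letters (m ++ γ₁)).ncard
        ≤ (letters γ₂).ncard := Set.ncard_le_ncard hsub (Set.toFinite _)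
      _ ≤ γ₂.length := ncard_letters_le_length γ₂
  have hXk : X ⊆ G.kernel (letters ((m ++ γ₁) ++ δ)) := by
    have e1 : G.kernel (letters α) = G.kernel (letters (m ++ γ₁)) :=
      (G.kernel_eq_of_cont_eq hv₁ hα hcont₁).symm
    have e2 : G.kernel (letters (m ++ γ₁)) ⊆ G.kernel (letters ((m ++ γ₁) ++ δ)) :=
      G.kernel_mono_append hint δ (m ++ γ₁) hw₁
    intro y hy
    exact e2 (e1 ▸ hXα hy)
  have hv₂len_le : (m ++ γ₂).length ≤ ((m ++ γ₁) ++ δ).length :=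
    G.span_length_le hw₁ hv₂ hwspan
  obtain ⟨η, hη1, hη2, hη3⟩ := G.extend_to_len (((m ++ γ₁) ++ δ).length - (m ++ γ₂).length)
    (m ++ γ₂) hv₂ ((m ++ γ₁) ++ δ) hw₁ (by omega)
  have hη4 : letters ((m ++ γ₂) ++ η) ⊆ G.spanR (letters ((m ++ γ₁) ++ δ)) := by
    rw [letters_append]
    exact Set.union_subset hwspan (hη2.trans (G.letters_subset_span hw₁))
  have hcontw : G.cont ((m ++ γ₂) ++ η) = G.cont ((m ++ γ₁) ++ δ) :=
    G.cont_eq_of_max hw₁ hη1 (G.letters_subset_span hw₁) hη4 hη3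
      (fun w' hw' hwC => G.span_length_le hw₁ hw' hwC)
  have hYk : Y ⊆ G.kernel (letters ((m ++ γ₁) ++ δ)) := by
    have e1 : G.kernel (letters β) = G.kernel (letters (m ++ γ₂)) :=
      (G.kernel_eq_of_cont_eq hv₂ hβ hcont₂).symm
    have e2 : G.kernel (letters (m ++ γ₂)) ⊆ G.kernel (letters ((m ++ γ₂) ++ η)) :=
      G.kernel_mono_append hint η (m ++ γ₂) hη1
    have e3 : G.kernel (letters ((m ++ γ₂) ++ η)) = G.kernel (letters ((m ++ γ₁) ++ δ)) :=
      G.kernel_eq_of_cont_eq hη1 hw₁ hcontw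
    intro y hy
    rw [← e3]
    exact e2 (e1 ▸ hYβ hy)
  have hjoin_bound : G.rhoNat (X ∪ Y) ≤ ((m ++ γ₁) ++ δ).length :=
    G.rhoNat_le hw₁ (Set.union_subset hXk hYk)
  simp only [List.length_append] at hv₁len hv₂len hwlen hjoin_bound
  rw [← hαlen, ← hβlen]
  omega

end Greedoid

end Aux

/-- If a normal greedoid is interval and its kernels satisfy the meet condition, then
the greatest representation `ρ♮` is a polymatroid rank function: normalized, monotone,
and submodular. -/
theorem rhoNat_polymatroid {A : Type*} [Fintype A] (G : Greedoid A)
    (hnorm : G.Normal) (hint : G.IntervalProperty)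
    (hker : ∀ F F' M : Set (List A), G.IsFlat F → G.IsFlat F' → G.IsMeet M F F' →
      flatKernel M = flatKernel F ∩ flatKernel F') :
    IsPolymatroid (fun X : Set A => (G.rhoNat X : ℝ)) := by
  refine ⟨?_, ?_, ?_⟩
  · show ((G.rhoNat ∅ : ℕ) : ℝ) = 0
    rw [G.rhoNat_empty]
    norm_num
  · intro X Y h
    show ((G.rhoNat X : ℕ) : ℝ) ≤ ((G.rhoNat Y : ℕ) : ℝ)
    exact_mod_cast G.rhoNat_mono hnorm h
  · intro X Y
    have h := G.rhoNat_submodular hnorm hint hker X Y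
    show ((G.rhoNat (X ∪ Y) : ℕ) : ℝ) + ((G.rhoNat (X ∩ Y) : ℕ) : ℝ)
      ≤ ((G.rhoNat X : ℕ) : ℝ) + ((G.rhoNat Y : ℕ) : ℝ)
    exact_mod_cast h

end PaperPG
end

section
/- Every antimatroid is optimistic. That is, if Λ is a normal greedoid over a finite alphabet Σ such that for all α, β ∈ Λ with α̃ ⊄ β̃ there exists x ∈ α̃ with βx ∈ Λ, then for every non-loop y ∈ Σ and every basic (maximum-length) word x₁⋯x_r ∈ Λ there is an index 0 ≤ i ≤ r with y ∈ Γ[x₁⋯x_i]. -/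
namespace PaperPG

/-- Every antimatroid is optimistic. -/
theorem antimatroid_optimistic {A : Type*} [Fintype A] (G : Greedoid A)
    (hnorm : G.Normal)
    (hanti : ∀ α ∈ G.lang, ∀ β ∈ G.lang, ¬ (letters α ⊆ letters β) →
      ∃ x ∈ letters α, β ++ [x] ∈ G.lang) :
    G.Optimistic := by
  intro y hy w hw
  -- y occurs in some feasible word
  simp only [Greedoid.IsLoop, not_forall] at hy
  obtain ⟨α, hα, hyα⟩ := hy
  rw [not_not] at hyα
  -- y must occur in w, else we could extend w, contradicting basicness
  have hyw : y ∈ w := by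
    by_contra hyw
    obtain ⟨x, _, hx⟩ := hanti α hα w hw.1 (fun hsub => hyw (hsub hyα))
    have := hw.2 _ hx
    simp at this
  obtain ⟨i, hi, hget⟩ := List.getElem_of_mem hyw
  refine ⟨i, le_of_lt hi, ?_⟩
  have htake : w.take (i + 1) = w.take i ++ [y] := by
    rw [List.take_succ]
    simp [List.getElem?_eq_getElem hi, hget]
  have : w.take (i + 1) ∈ G.lang := by
    have := G.hereditary (w.take (i + 1)) (w.drop (i + 1))
    rw [List.take_append_drop] at this
    exact this hw.1
  rw [htake] at this
  exact this

end PaperPG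
end
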